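/- A permutation σ of {1,…,n} is stack-sortable (i.e., S(σ) = id_n) if and only if σ avoids the pattern 231, that is, there are no indices i < j < k such that σ(k) < σ(i) < σ(j). -/

import Mathlib

namespace TSP

theorem foldr_max_mem {α : Type} [LinearOrder α] (x : α) (l : List α) :
    l.foldr max x ∈ x :: l := by
  induction l with
  | nil => simp
  | cons a t ih =>
    simp only [List.foldr_cons]
    rcases max_choice a (t.foldr max x) with h | h <;> rw [h]
    · simp
    · rcases List.mem_cons.mp ih with h' | h'
      · rw [h']; simp
      · exact List.mem_cons.mpr (Or.inr (List.mem_cons.mpr (Or.inr h')))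

theorem length_takeWhile_lt {α : Type} [DecidableEq α] {m : α} {l : List α}
    (h : m ∈ l) : (l.takeWhile (· ≠ m)).length < l.length := by
  have hd : l.dropWhile (· ≠ m) ≠ [] := by
    intro hnil
    have := List.dropWhile_eq_nil_iff.mp hnil m h
    simp at this
  have hsum : (l.takeWhile (· ≠ m)).length + (l.dropWhile (· ≠ m)).length = l.length := by
    rw [← List.length_append, List.takeWhile_append_dropWhile]
  have : 0 < (l.dropWhile (· ≠ m)).length := List.length_pos_iff.mpr hd
  omega

theorem length_tail_dropWhile_lt {α : Type} [DecidableEq α] {m : α} {l : List α}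
    (h : l ≠ []) : ((l.dropWhile (· ≠ m)).tail).length < l.length := by
  have hsum : (l.takeWhile (· ≠ m)).length + (l.dropWhile (· ≠ m)).length = l.length := by
    rw [← List.length_append, List.takeWhile_append_dropWhile]
  have h2 : ((l.dropWhile (· ≠ m)).tail).length = (l.dropWhile (· ≠ m)).length - 1 :=
    List.length_tail
  have : 0 < l.length := List.length_pos_iff.mpr h
  omega

/-- The stack-sorting operator `S`: `S(ε) = ε`, and if `A` is nonempty with
largest element `m` and `A = A_L · (m) · A_R`, then `S(A) = S(A_L) · S(A_R) · (m)`. -/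
def S {α : Type} [LinearOrder α] : List α → List α
  | [] => []
  | x :: l =>
    let m := l.foldr max x
    S ((x :: l).takeWhile (· ≠ m)) ++ S (((x :: l).dropWhile (· ≠ m)).tail) ++ [m]
termination_by l => l.length
decreasing_by
  · exact length_takeWhile_lt (by first | (rw [List.foldr_attach]; exact foldr_max_mem x l) | simpa using foldr_max_mem x l)
  · exact length_tail_dropWhile_lt (by simp)

/-- The identity permutation `id_n = (1, 2, …, n)` as a list. -/
def idPerm (n : ℕ) : List ℕ := List.range' 1 n

/-- `l` is a permutation of `{1, …, n}` (viewed as a sequence). -/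
def IsPermOf (n : ℕ) (l : List ℕ) : Prop := l.Perm (idPerm n)

/-- `l` is a two-stack sortable permutation (of `{1, …, len l}`). -/
def Is2SS (l : List ℕ) : Prop := IsPermOf l.length l ∧ S (S l) = idPerm l.length

/-- `σ^{+k}`: add `k` to every entry. -/
def shift (k : ℕ) (l : List ℕ) : List ℕ := l.map (· + k)

/-- `σ^{+(k1,m,k2)}`: add `k1` to every entry strictly smaller than `m`, `k2` to the others. -/
def shift3 (k1 m k2 : ℕ) (l : List ℕ) : List ℕ :=
  l.map (fun a => if a < m then a + k1 else a + k2)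

/-- Standardization `P(A)`: the permutation of `{1,…,len A}` in the same relative order. -/
def stand (l : List ℕ) : List ℕ := l.map (fun a => (l.filter (fun b => b ≤ a)).length)

/-- Avoidance of the pattern 231: no positions `i < j < k` with `l(k) < l(i) < l(j)`. -/
def Avoids231 (l : List ℕ) : Prop :=
  ¬ ∃ i j k, i < j ∧ j < k ∧ k < l.length ∧
      l.getD k 0 < l.getD i 0 ∧ l.getD i 0 < l.getD j 0

/-- The list of values of the left-to-right maxima of `l`, in order. -/
def lrMaxima (l : List ℕ) : List ℕ :=
  ((List.range l.length).filter
    (fun i => (l.take i).all (fun b => b < l.getD i 0))).map (fun i => l.getD i 0)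

/-- `lmax`: the number of left-to-right maxima. -/
def lmax (l : List ℕ) : ℕ :=
  (List.range l.length).countP (fun i => (l.take i).all (fun b => b < l.getD i 0))

/-- `rmax`: the number of right-to-left maxima. -/
def rmax (l : List ℕ) : ℕ :=
  (List.range l.length).countP (fun i => (l.drop (i+1)).all (fun b => b < l.getD i 0))

/-- `asc`: the number of ascents. -/
def asc (l : List ℕ) : ℕ :=
  (List.range (l.length - 1)).countP (fun i => l.getD i 0 < l.getD (i+1) 0)

/-- `des`: the number of descents. -/
def des (l : List ℕ) : ℕ :=
  (List.range (l.length - 1)).countP (fun i => l.getD (i+1) 0 < l.getD i 0)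

/-- `slmax(π)`: the number of left-to-right maxima of `S(π)`. -/
def slmax (l : List ℕ) : ℕ := lmax (S l)

/-- `sldes(π)`: the number of entries `a` that precede `a - 1` in `S(π)`. -/
def sldes (l : List ℕ) : ℕ :=
  (List.range (S l).length).countP
    (fun i => ((S l).drop (i+1)).any (fun b => b + 1 = (S l).getD i 0))

/-- The construction `C1(π1, π2) = π1 · (k+ℓ+1) · π2^{+k}`. -/
def C1 (p1 p2 : List ℕ) : List ℕ :=
  p1 ++ (p1.length + p2.length + 1) :: shift p1.length p2

/-- The `i`-th left-to-right maximum `a_i` of `S(π2)` (1-indexed). -/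
def lrm (p2 : List ℕ) (i : ℕ) : ℕ := (lrMaxima (S p2)).getD (i - 1) 0

/-- The construction `C2(π1, π2, i) = π1^{+(0,k,a_i)} · (k+ℓ+1) · π2^{+(k-1,a_i+1,k)}`. -/
def C2 (p1 p2 : List ℕ) (i : ℕ) : List ℕ :=
  shift3 0 p1.length (lrm p2 i) p1 ++
    (p1.length + p2.length + 1) :: shift3 (p1.length - 1) (lrm p2 i + 1) p1.length p2

/-- The decomposition `D(π) = (P(π_ℓ), P(π_r))`, where `π = π_ℓ · (n) · π_r`
with `n` the largest entry of `π`. -/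
def D (l : List ℕ) : List ℕ × List ℕ :=
  match l with
  | [] => ([], [])
  | x :: t =>
    let m := t.foldr max x
    (stand ((x :: t).takeWhile (· ≠ m)), stand (((x :: t).dropWhile (· ≠ m)).tail))

/-!
Split a list at its first maximum `m` as `L ++ m :: R`. Then `S (L ++ m :: R) = S L ++ S R ++ [m]`
is increasing iff `S L` and `S R` are increasing and every entry of `L` is below every entry of `R`.
A 231 pattern either lies inside `L` or inside `R`, or it uses `m` as its `3` with an entry
`a ∈ L` above an entry `b ∈ R`, so induction along the recursion of `S` shows that `S l` is
increasing exactly when `l` avoids 231. As `S σ` is a rearrangement of `σ`, it is increasing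
exactly when it is the identity.
-/

theorem triple_sublist_append {α : Type*} {a b c : α} {L M : List α}
    (h : [a, b, c].Sublist (L ++ M)) :
    [a, b, c].Sublist L ∨ [a, b, c].Sublist M ∨ a ∈ L ∧ c ∈ M := by
  obtain ⟨u, v, huv, hu, hv⟩ := List.sublist_append_iff.1 h
  rcases u with _ | ⟨_, _ | ⟨_, _ | ⟨_, _ | ⟨_, u⟩⟩⟩⟩ <;>
    rcases v with _ | ⟨_, _ | ⟨_, _ | ⟨_, _ | ⟨_, v⟩⟩⟩⟩ <;> simp_all
  all_goals exact Or.inr (Or.inr (by first | exact hv.subset (by simp) | exact hu.subset (by simp)))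

theorem triple_sublist_iff_exists_getD {α : Type*} {l : List α} {a b c d : α} :
    [a, b, c].Sublist l ↔ ∃ i j k, i < j ∧ j < k ∧ k < l.length ∧
      l.getD i d = a ∧ l.getD j d = b ∧ l.getD k d = c := by
  rw [List.sublist_iff_exists_fin_orderEmbedding_get_eq]
  constructor
  · rintro ⟨f, hf⟩
    refine ⟨f 0, f 1, f 2, f.strictMono (show (0 : Fin 3) < 1 by decide),
      f.strictMono (show (1 : Fin 3) < 2 by decide), (f 2).2, ?_, ?_, ?_⟩
    all_goals rw [List.getD_eq_getElem]
    exacts [(hf 0).symm, (hf 1).symm, (hf 2).symm]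
  · rintro ⟨i, j, k, hij, hjk, hk, rfl, rfl, rfl⟩
    have hj : j < l.length := hjk.trans hk
    have hi : i < l.length := hij.trans hj
    let g : Fin 3 → Fin l.length := ![⟨i, hi⟩, ⟨j, hj⟩, ⟨k, hk⟩]
    have hg : StrictMono g := Fin.strictMono_iff_lt_succ.2 fun t => by
      fin_cases t <;> simp [g, Fin.lt_def, hij, hjk]
    refine ⟨OrderEmbedding.ofStrictMono g hg, fun t => ?_⟩
    fin_cases t <;> simp [g, hi, hj, hk]

theorem takeWhile_append_cons_tail_dropWhile {α : Type*} [DecidableEq α] {m : α} {l : List α}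
    (h : m ∈ l) : l.takeWhile (· ≠ m) ++ m :: (l.dropWhile (· ≠ m)).tail = l := by
  induction l with
  | nil => simp at h
  | cons b t ih =>
    by_cases hb : b = m
    · simp [hb]
    · simp_all [List.mem_cons, Ne.symm hb]

section LinearOrder

variable {α : Type} [LinearOrder α]

theorem le_foldr_max {x a : α} {l : List α} (h : a ∈ x :: l) : a ≤ l.foldr max x := by
  induction l with
  | nil => simp_all
  | cons b t ih => grind

theorem S_append_cons {L R : List α} {m : α} (hL : ∀ a ∈ L, a < m) (hR : ∀ b ∈ R, b ≤ m) :
    S (L ++ m :: R) = S L ++ S R ++ [m] := by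
  obtain ⟨x, l, hxl⟩ :=
    List.exists_cons_of_ne_nil (List.append_ne_nil_of_right_ne_nil L (List.cons_ne_nil m R))
  have hmax : l.foldr max x = m := by
    refine le_antisymm ?_ (le_foldr_max (hxl ▸ by simp))
    have := foldr_max_mem x l
    rw [← hxl] at this
    grind
  have hL' : ∀ a ∈ L, decide (a ≠ m) = true := fun a ha => by simpa using (hL a ha).ne
  rw [hxl, S.eq_2, hmax, ← hxl, List.takeWhile_append_of_pos hL',
    List.dropWhile_append_of_pos hL']
  simp

theorem S_induction {motive : List α → Prop} (nil : motive [])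
    (split : ∀ L m R, (∀ a ∈ L, a < m) → (∀ b ∈ R, b ≤ m) → motive L → motive R →
      motive (L ++ m :: R)) (l : List α) : motive l := by
  induction l using S.induct with
  | case1 => exact nil
  | case2 x l m ihL ihR =>
    have hm : m = l.foldr max x := List.foldr_attach ..
    have hle : ∀ a ∈ x :: l, a ≤ m := fun a ha => hm ▸ le_foldr_max ha
    have hL : ∀ a ∈ (x :: l).takeWhile (· ≠ m), a < m := fun a ha =>
      (hle a ((List.takeWhile_sublist _).subset ha)).lt_of_ne
        (by simpa using List.mem_takeWhile_imp ha)
    have hR : ∀ b ∈ ((x :: l).dropWhile (· ≠ m)).tail, b ≤ m := fun b hb =>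
      hle b ((List.dropWhile_sublist _).subset (List.mem_of_mem_tail hb))
    have := split _ m _ hL hR ihL ihR
    rwa [takeWhile_append_cons_tail_dropWhile (hm ▸ foldr_max_mem x l)] at this

theorem perm_S (l : List α) : (S l).Perm l := by
  induction l using S_induction with
  | nil => rw [S]
  | split L m R hL hR ihL ihR =>
    rw [S_append_cons hL hR, List.append_assoc]
    exact ihL.append ((ihR.append_right _).trans (List.perm_append_singleton ..))

def Contains231 (l : List α) : Prop :=
  ∃ a b c, [a, b, c].Sublist l ∧ c < a ∧ a < b

theorem contains231_append_cons_iff {L R : List α} {m : α} (hL : ∀ a ∈ L, a < m)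
    (hR : ∀ b ∈ R, b < m) :
    Contains231 (L ++ m :: R) ↔ Contains231 L ∨ Contains231 R ∨ ∃ a ∈ L, ∃ b ∈ R, b < a := by
  constructor
  · rintro ⟨a, b, c, h, hca, hab⟩
    rcases triple_sublist_append h with h | h | ⟨ha, hc⟩
    · exact Or.inl ⟨a, b, c, h, hca, hab⟩
    · have hbm : b ≤ m := by
        rcases List.mem_cons.1 (h.subset (by simp : b ∈ [a, b, c])) with rfl | hb
        exacts [le_rfl, (hR b hb).le]
      have hsub : [a, b, c].Sublist R := by
        simpa [(hab.trans_le hbm).ne] using List.sublist_cons_iff.1 h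
      exact Or.inr (Or.inl ⟨a, b, c, hsub, hca, hab⟩)
    · have hcR : c ∈ R := by
        simpa [(hca.trans (hL a ha)).ne] using hc
      exact Or.inr (Or.inr ⟨a, ha, c, hcR, hca⟩)
  · rintro (⟨a, b, c, h, hca, hab⟩ | ⟨a, b, c, h, hca, hab⟩ | ⟨a, ha, b, hb, hba⟩)
    · exact ⟨a, b, c, h.trans (List.sublist_append_left _ _), hca, hab⟩
    · exact ⟨a, b, c, h.trans ((List.sublist_cons_self m R).trans
        (List.sublist_append_right _ _)), hca, hab⟩
    · refine ⟨a, m, b, ?_, hba, hL a ha⟩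
      exact (List.singleton_sublist.2 ha).append ((List.singleton_sublist.2 hb).cons_cons m)

theorem sortedLT_S_iff_not_contains231 {l : List α} (hl : l.Nodup) :
    (S l).SortedLT ↔ ¬ Contains231 l := by
  induction l using S_induction with
  | nil => simp [S, Contains231, List.sortedLT_iff_pairwise]
  | split L m R hL hR ihL ihR =>
    obtain ⟨hLnd, ⟨hmR, hRnd⟩, hLR⟩ : L.Nodup ∧ (m ∉ R ∧ R.Nodup) ∧ _ := by
      simpa only [List.nodup_append, List.nodup_cons] using hl
    have hR' : ∀ b ∈ R, b < m := fun b hb => (hR b hb).lt_of_ne (by rintro rfl; exact hmR hb)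
    rw [S_append_cons hL hR, contains231_append_cons_iff hL hR']
    simp only [List.sortedLT_iff_pairwise] at ihL ihR ⊢
    rw [List.pairwise_append, List.pairwise_append, ihL hLnd, ihR hRnd]
    simp only [List.pairwise_singleton, List.mem_singleton, forall_eq, List.mem_append,
      (perm_S _).mem_iff, not_or, not_exists, not_and, not_lt, true_and]
    have hbelow : ∀ a, a ∈ L ∨ a ∈ R → a < m := by
      rintro a (ha | ha)
      exacts [hL a ha, hR' a ha]
    have hcross : (∀ a ∈ L, ∀ b ∈ R, a < b) ↔ ∀ a ∈ L, ∀ b ∈ R, a ≤ b :=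
      ⟨fun h a ha b hb => (h a ha b hb).le,
        fun h a ha b hb => (h a ha b hb).lt_of_ne (hLR a ha b (List.mem_cons_of_mem m hb))⟩
    rw [hcross]
    exact and_iff_left hbelow

end LinearOrder

theorem avoids231_iff_not_contains231 (l : List ℕ) : Avoids231 l ↔ ¬ Contains231 l := by
  simp only [Avoids231, Contains231, triple_sublist_iff_exists_getD (d := 0)]
  refine not_congr ⟨?_, ?_⟩
  · rintro ⟨i, j, k, hij, hjk, hk, hki, hij'⟩
    exact ⟨_, _, _, ⟨i, j, k, hij, hjk, hk, rfl, rfl, rfl⟩, hki, hij'⟩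
  · rintro ⟨_, _, _, ⟨i, j, k, hij, hjk, hk, rfl, rfl, rfl⟩, hki, hij'⟩
    exact ⟨i, j, k, hij, hjk, hk, hki, hij'⟩

/-- A permutation `σ` of `{1,…,n}` is stack-sortable (i.e. `S(σ) = id_n`)
if and only if `σ` avoids the pattern 231. -/
theorem stackSortable_iff_avoids231 (n : ℕ) (σ : List ℕ) (hσ : IsPermOf n σ) :
    S σ = idPerm n ↔ Avoids231 σ := by
  have hid : (idPerm n).SortedLT := List.sortedLT_range' 1 n one_ne_zero
  rw [avoids231_iff_not_contains231,
    ← sortedLT_S_iff_not_contains231 (hσ.nodup_iff.2 hid.nodup)]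
  exact ⟨fun h => h ▸ hid,
    fun h => h.eq_of_mem_iff hid fun _ => ((perm_S σ).trans hσ).mem_iff⟩

end TSP
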